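/- Let R be a commutative noetherian ring, let G and M be finitely generated R-modules with M in the extension closure ext(G), and let n be a nonnegative integer. Then the n-th syzygy of M belongs to the extension closure ext(R ⊕ Ω^n G), where Ω^n denotes the n-th syzygy. -/

import Mathlib

/-- The extension closure `ext G`. -/
inductive ExtClosure.{u_1, u_2} (R : Type) [CommRing R] (G : ModuleCat.{u_1} R) : ModuleCat.{u_1} R → Prop
  | base : ExtClosure R G G
  | summand {M : ModuleCat R} (N : ModuleCat R) (N' : ModuleCat.{u_2} R) (e : M ≃ₗ[R] N × N') :
      ExtClosure R G M → ExtClosure R G N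
  | extension {L M N : ModuleCat R} (f : L →ₗ[R] M) (g : M →ₗ[R] N)
      (hf : Function.Injective f) (hg : Function.Surjective g) (hfg : Function.Exact f g) :
      ExtClosure R G L → ExtClosure R G N → ExtClosure R G M

/-- `IsSyzygy R n S M` means that `S` is an `n`-th syzygy of `M`: there is an exact
sequence `0 → S → P_{n-1} → ⋯ → P_0 → M → 0` with each `P_i` finitely generated
projective. -/
def IsSyzygy (R : Type) [CommRing R] : ℕ → ModuleCat R → ModuleCat R → Prop
  | 0, S, M => Nonempty (S ≃ₗ[R] M)
  | n + 1, S, M => ∃ (P : ModuleCat R) (f : P →ₗ[R] M),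
      Module.Finite R P ∧ Module.Projective R P ∧ Function.Surjective f ∧
      IsSyzygy R n S (ModuleCat.of R (LinearMap.ker f))

/-!
Induct on the construction of `M` in `ext G`. By Schanuel's lemma two `n`-th syzygies of the same
module agree up to finitely generated projective summands, and `ext (R ⊕ Ωⁿ G)` contains all
finitely generated projectives (they are summands of some `Rᵏ`), so whether an `n`-th syzygy of `M`
lies in it does not depend on the choice of syzygy. For `M = G` this is the base case; syzygies
commute with direct sums, which handles summands; and the horseshoe lemma turns an extension
`0 → L → M → N → 0` into an extension `0 → Ωⁿ L → Ωⁿ M → Ωⁿ N → 0` of chosen syzygies.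
-/

open LinearMap Function

universe u u' v v' w

theorem Function.Exact.prodMap {L M N L' M' N' : Type*} [Zero N] [Zero N'] {f : L → M}
    {g : M → N} {f' : L' → M'} {g' : M' → N'} (h : Exact f g) (h' : Exact f' g') :
    Exact (Prod.map f f') (Prod.map g g') := by
  rintro ⟨y, y'⟩
  simp [Prod.ext_iff, Set.range_prodMap, h y, h' y']

section Modules

variable {R : Type*} [Ring R] {L M N : Type*} [AddCommGroup L] [Module R L] [AddCommGroup M]
  [Module R M] [AddCommGroup N] [Module R N]

theorem Function.Exact.nonempty_linearEquiv_prod_of_projective [Module.Projective R N]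
    {f : L →ₗ[R] M} {g : M →ₗ[R] N} (hfg : Exact f g) (hf : Injective f) (hg : Surjective g) :
    Nonempty (M ≃ₗ[R] L × N) :=
  have ⟨l, hl⟩ := Module.projective_lifting_property g LinearMap.id hg
  ⟨(hfg.splitSurjectiveEquiv hf ⟨l, hl⟩).1⟩

variable {P₁ P₂ : Type*} [AddCommGroup P₁] [Module R P₁] [AddCommGroup P₂] [Module R P₂]

theorem nonempty_eqLocus_linearEquiv_ker_prod [Module.Projective R P₂] (f₁ : P₁ →ₗ[R] M)
    (f₂ : P₂ →ₗ[R] M) (hf₁ : Surjective f₁) :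
    Nonempty (eqLocus (f₁ ∘ₗ fst R P₁ P₂) (f₂ ∘ₗ snd R P₁ P₂) ≃ₗ[R] ker f₁ × P₂) := by
  let i : ker f₁ →ₗ[R] eqLocus (f₁ ∘ₗ fst R P₁ P₂) (f₂ ∘ₗ snd R P₁ P₂) :=
    (inl R P₁ P₂).restrict fun x hx ↦ by simpa [mem_eqLocus] using hx
  let π := snd R P₁ P₂ ∘ₗ (eqLocus (f₁ ∘ₗ fst R P₁ P₂) (f₂ ∘ₗ snd R P₁ P₂)).subtype
  refine Exact.nonempty_linearEquiv_prod_of_projective (f := i) (g := π) ?_ ?_ ?_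
  · rintro ⟨⟨x, y⟩, hxy⟩
    constructor
    · rintro (rfl : y = 0)
      exact ⟨⟨x, by simpa using hxy⟩, rfl⟩
    · rintro ⟨z, hz⟩
      rw [← hz]
      rfl
  · intro x y hxy
    exact Subtype.ext (congrArg Prod.fst (congrArg Subtype.val hxy))
  · intro y
    obtain ⟨x, hx⟩ := hf₁ (f₂ y)
    exact ⟨⟨(x, y), hx⟩, rfl⟩

/-- Schanuel's lemma. -/
theorem nonempty_ker_prod_linearEquiv_ker_prod [Module.Projective R P₁] [Module.Projective R P₂]
    {f₁ : P₁ →ₗ[R] M} {f₂ : P₂ →ₗ[R] M} (hf₁ : Surjective f₁) (hf₂ : Surjective f₂) :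
    Nonempty ((ker f₁ × P₂) ≃ₗ[R] ker f₂ × P₁) := by
  obtain ⟨e₁⟩ := nonempty_eqLocus_linearEquiv_ker_prod f₁ f₂ hf₁
  obtain ⟨e₂⟩ := nonempty_eqLocus_linearEquiv_ker_prod f₂ f₁ hf₂
  have hswap : (eqLocus (f₁ ∘ₗ fst R P₁ P₂) (f₂ ∘ₗ snd R P₁ P₂)).map
      (LinearEquiv.prodComm R P₁ P₂ : P₁ × P₂ →ₗ[R] P₂ × P₁) =
      eqLocus (f₂ ∘ₗ fst R P₂ P₁) (f₁ ∘ₗ snd R P₂ P₁) := by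
    ext ⟨y, x⟩
    simp [Submodule.mem_map_equiv, mem_eqLocus, eq_comm]
  exact ⟨e₁.symm ≪≫ₗ (LinearEquiv.prodComm R P₁ P₂).ofSubmodules _ _ hswap ≪≫ₗ e₂⟩

theorem Function.Exact.exists_horseshoe {A B : Type*} [AddCommGroup A] [Module R A]
    [AddCommGroup B] [Module R B] [Module.Projective R B] {f : L →ₗ[R] M} {g : M →ₗ[R] N}
    (hfg : Exact f g) (hf : Injective f) (hg : Surjective g) {p : A →ₗ[R] L} {q : B →ₗ[R] N}
    (hp : Surjective p) (hq : Surjective q) :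
    ∃ F : A × B →ₗ[R] M, Surjective F ∧ ∃ (i : ker p →ₗ[R] ker F) (π : ker F →ₗ[R] ker q),
      Injective i ∧ Surjective π ∧ Exact i π := by
  obtain ⟨h, hh⟩ := Module.projective_lifting_property g q hg
  have hgh (y : B) : g (h y) = q y := congr($hh y)
  -- If `q y = g m`, the defect `m - h y` lies in `ker g = range (f ∘ p)`.
  have lift (m : M) (y : B) (hy : q y = g m) : ∃ x, f (p x) + h y = m := by
    obtain ⟨a, ha⟩ := (hfg (m - h y)).mp (by rw [map_sub, hgh, hy, sub_self])
    obtain ⟨x, rfl⟩ := hp a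
    exact ⟨x, by rw [ha, sub_add_cancel]⟩
  let F := (f ∘ₗ p).coprod h
  have hF (z : A × B) : F z = f (p z.1) + h z.2 := rfl
  refine ⟨F, fun m ↦ ?_, (inl R A B).restrict fun x hx ↦ ?_,
    (snd R A B).restrict fun z hz ↦ ?_, fun x x' hxx' ↦ ?_, fun y ↦ ?_, fun z ↦ ?_⟩
  · obtain ⟨y, hy⟩ := hq (g m)
    obtain ⟨x, hx⟩ := lift m y hy
    exact ⟨(x, y), hx⟩
  · simp_all [mem_ker]
  · have hz : h z.2 = -f (p z.1) := eq_neg_of_add_eq_zero_right hz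
    rw [mem_ker, snd_apply, ← hgh, hz, map_neg, hfg.apply_apply_eq_zero, neg_zero]
  · exact Subtype.ext congr(($hxx' : A × B).1)
  · obtain ⟨x, hx⟩ := lift 0 y (by rw [map_zero]; exact y.2)
    exact ⟨⟨(x, y), hx⟩, rfl⟩
  · obtain ⟨⟨x, y⟩, hz⟩ := z
    constructor
    · intro (hy : (⟨y, _⟩ : ker q) = 0)
      obtain rfl : y = 0 := congr(Subtype.val $hy)
      have hx : p x = 0 := hf (by simpa [mem_ker, hF] using hz)
      exact ⟨⟨x, hx⟩, rfl⟩
    · rintro ⟨x, hx⟩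
      rw [← hx]
      rfl

end Modules

section Copies

variable (R : Type) [Ring R]

theorem exists_moduleCat_linearEquiv (M : Type v) [AddCommGroup M] [Module R M]
    [Module.Finite R M] : ∃ N : ModuleCat.{w} R, Nonempty (N ≃ₗ[R] M) :=
  have := Module.Finite.small.{w} R M
  ⟨.of R (Shrink.{w} M), ⟨Shrink.linearEquiv R M⟩⟩

theorem exists_finite_free_surjective (M : Type v) [AddCommGroup M] [Module R M]
    [Module.Finite R M] : ∃ (k : ℕ) (f : ULift.{v} (Fin k → R) →ₗ[R] M), Surjective f :=
  have ⟨k, f, hf⟩ := Module.Finite.exists_fin' R M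
  ⟨k, f ∘ₗ ULift.moduleEquiv.toLinearMap, hf.comp ULift.moduleEquiv.surjective⟩

end Copies

namespace ExtClosure

variable {R : Type} [CommRing R] {G : ModuleCat.{u} R}

theorem of_linearEquiv_prod {M N : ModuleCat.{u} R} {C : Type v} [AddCommGroup C] [Module R C]
    [Module.Finite R C] (e : M ≃ₗ[R] N × C) (h : ExtClosure.{u, w} R G M) :
    ExtClosure.{u, w} R G N :=
  have ⟨C', ⟨e'⟩⟩ := exists_moduleCat_linearEquiv.{_, w} R C
  summand N C' (e ≪≫ₗ (LinearEquiv.refl R N).prodCongr e'.symm) h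

theorem of_linearEquiv {M N : ModuleCat.{u} R} (e : M ≃ₗ[R] N) (h : ExtClosure.{u, w} R G M) :
    ExtClosure.{u, w} R G N :=
  h.of_linearEquiv_prod (C := PUnit.{1}) (e ≪≫ₗ LinearEquiv.prodUnique.symm)

theorem prod {A B : ModuleCat.{u} R} (hA : ExtClosure.{u, w} R G A)
    (hB : ExtClosure.{u, w} R G B) : ExtClosure.{u, w} R G (.of R (A × B)) :=
  extension (inl R A B) (snd R A B) inl_injective snd_surjective Exact.inl_snd hA hB

theorem finite [Module.Finite R G] {M : ModuleCat.{u} R} (h : ExtClosure.{u, w} R G M) :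
    Module.Finite R M := by
  induction h with
  | base => assumption
  | summand N N' e _ ih =>
    exact .of_surjective (fst R N N' ∘ₗ e.toLinearMap) (Prod.fst_surjective.comp e.surjective)
  | extension f g _ hg hfg _ _ ihL ihN => exact .of_exact hfg hg

theorem of_subsingleton [Module.Finite R G] (M : ModuleCat.{u} R) [Subsingleton M] :
    ExtClosure.{u, w} R G M :=
  letI : Unique M := uniqueOfSubsingleton 0
  base.of_linearEquiv_prod (C := G) LinearEquiv.uniqueProd.symm

theorem ulift_fin_pi [Module.Finite R G] (hR : ExtClosure.{u, w} R G (.of R (ULift.{u} R)))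
    (k : ℕ) : ExtClosure.{u, w} R G (.of R (ULift.{u} (Fin k → R))) := by
  induction k with
  | zero => exact of_subsingleton _
  | succ k ih =>
    exact (hR.prod ih).of_linearEquiv <| ULift.moduleEquiv.prodCongr ULift.moduleEquiv ≪≫ₗ
      Fin.consLinearEquiv R (fun _ ↦ R) ≪≫ₗ ULift.moduleEquiv.symm

theorem of_projective [Module.Finite R G] (hR : ExtClosure.{u, w} R G (.of R (ULift.{u} R)))
    (P : ModuleCat.{u} R) [Module.Finite R P] [Module.Projective R P] :
    ExtClosure.{u, w} R G P := by
  obtain ⟨k, f, hf⟩ := exists_finite_free_surjective R P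
  obtain ⟨e⟩ := (exact_subtype_ker_map f).nonempty_linearEquiv_prod_of_projective
    Subtype.val_injective hf
  have : Module.Finite R (ker f) := .of_surjective (fst R _ P ∘ₗ e.toLinearMap)
    (Prod.fst_surjective.comp e.surjective)
  exact (ulift_fin_pi hR k).of_linearEquiv_prod (e ≪≫ₗ LinearEquiv.prodComm R _ P)

theorem ulift_self_of_prod (X : ModuleCat.{u} R) [Module.Finite R X] :
    ExtClosure.{u, w} R (.of R (R × X)) (.of R (ULift.{u} R)) :=
  base.of_linearEquiv_prod (C := X) (ULift.moduleEquiv.symm.prodCongr (LinearEquiv.refl R X))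

end ExtClosure

namespace IsSyzygy

variable {R : Type} [CommRing R] {n : ℕ}

theorem congr {S : ModuleCat.{u} R} {S' : ModuleCat.{u'} R} {M : ModuleCat.{v} R}
    {M' : ModuleCat.{v'} R} (h : IsSyzygy R n S M) (eS : S ≃ₗ[R] S') (eM : M ≃ₗ[R] M') :
    IsSyzygy R n S' M' := by
  induction n generalizing S S' M M' with
  | zero => exact ⟨eS.symm ≪≫ₗ h.some ≪≫ₗ eM⟩
  | succ n ih =>
    obtain ⟨P, f, _, _, hf, hS⟩ := h
    obtain ⟨P', ⟨d⟩⟩ := exists_moduleCat_linearEquiv.{_, v'} R P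
    have hker : (ker f).map d.symm.toLinearMap = ker (eM.toLinearMap ∘ₗ f ∘ₗ d.toLinearMap) := by
      ext x
      simp [Submodule.mem_map_equiv]
    exact ⟨P', eM.toLinearMap ∘ₗ f ∘ₗ d.toLinearMap, .equiv d.symm, .of_equiv d.symm,
      eM.surjective.comp (hf.comp d.surjective), ih hS eS (d.symm.ofSubmodules _ _ hker)⟩

theorem succ_of_exact {S : ModuleCat.{u} R} {K : ModuleCat.{w} R} {P M : ModuleCat.{v} R}
    [Module.Finite R P] [Module.Projective R P] {i : K →ₗ[R] P} {f : P →ₗ[R] M}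
    (hi : Injective i) (hf : Surjective f) (hif : Exact i f) (h : IsSyzygy R n S K) :
    IsSyzygy R (n + 1) S M :=
  ⟨P, f, inferInstance, inferInstance, hf, h.congr (.refl R S)
    (LinearEquiv.ofInjective i hi ≪≫ₗ LinearEquiv.ofEq _ _ hif.linearMap_ker_eq.symm)⟩

theorem prod {S : ModuleCat.{u} R} {T : ModuleCat.{u'} R} {A : ModuleCat.{v} R}
    {B : ModuleCat.{v'} R} (hS : IsSyzygy R n S A) (hT : IsSyzygy R n T B) :
    IsSyzygy R n (.of R (S × T)) (.of R (A × B)) := by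
  induction n generalizing S T A B with
  | zero => exact ⟨hS.some.prodCongr hT.some⟩
  | succ n ih =>
    obtain ⟨P, f, _, _, hf, hS⟩ := hS
    obtain ⟨Q, g, _, _, hg, hT⟩ := hT
    refine succ_of_exact (P := .of R (P × Q)) (f := f.prodMap g)
      (i := (ker f).subtype.prodMap (ker g).subtype) ?_ (hf.prodMap hg) ?_ (ih hS hT)
    · exact Subtype.val_injective.prodMap Subtype.val_injective
    · rw [coe_prodMap, coe_prodMap]
      exact (exact_subtype_ker_map f).prodMap (exact_subtype_ker_map g)

theorem of_projective {P : ModuleCat.{u} R} {Q : ModuleCat.{v} R} [Module.Finite R Q]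
    [Module.Projective R Q] (e : P ≃ₗ[R] Q) : IsSyzygy R n P Q := by
  induction n with
  | zero => exact ⟨e⟩
  | succ n ih =>
    exact succ_of_exact (P := .of R (Q × Q)) inr_injective fst_surjective Exact.inr_fst ih

theorem finite [IsNoetherianRing R] {S : ModuleCat.{u} R} {M : ModuleCat.{v} R}
    [Module.Finite R M] (h : IsSyzygy R n S M) : Module.Finite R S := by
  induction n generalizing M with
  | zero => exact .equiv h.some.symm
  | succ n ih =>
    obtain ⟨P, f, _, _, -, hS⟩ := h
    exact ih hS

theorem exists_of_finite [IsNoetherianRing R] (n : ℕ) (M : ModuleCat.{v} R) [Module.Finite R M] :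
    ∃ S : ModuleCat.{u} R, IsSyzygy R n S M := by
  induction n generalizing M with
  | zero =>
    obtain ⟨S, ⟨e⟩⟩ := exists_moduleCat_linearEquiv.{_, u} R M
    exact ⟨S, ⟨e⟩⟩
  | succ n ih =>
    obtain ⟨k, f, hf⟩ := exists_finite_free_surjective R M
    obtain ⟨S, hS⟩ := ih (.of R (ker f))
    exact ⟨S, .of R (ULift.{v} (Fin k → R)), f, inferInstance, inferInstance, hf, hS⟩

theorem horseshoe [IsNoetherianRing R] (n : ℕ) {L M N : ModuleCat.{v} R} [Module.Finite R L]
    [Module.Finite R N] {f : L →ₗ[R] M} {g : M →ₗ[R] N} (hfg : Exact f g) (hf : Injective f)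
    (hg : Surjective g) :
    ∃ (SL S SN : ModuleCat.{u} R) (i : SL →ₗ[R] S) (p : S →ₗ[R] SN),
      Injective i ∧ Surjective p ∧ Exact i p ∧
      IsSyzygy R n SL L ∧ IsSyzygy R n S M ∧ IsSyzygy R n SN N := by
  induction n generalizing L M N with
  | zero =>
    have := Module.Finite.of_exact hfg hg
    obtain ⟨SL, ⟨eL⟩⟩ := exists_moduleCat_linearEquiv.{_, u} R L
    obtain ⟨S, ⟨eM⟩⟩ := exists_moduleCat_linearEquiv.{_, u} R M
    obtain ⟨SN, ⟨eN⟩⟩ := exists_moduleCat_linearEquiv.{_, u} R N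
    refine ⟨SL, S, SN, eM.symm.toLinearMap ∘ₗ f ∘ₗ eL.toLinearMap,
      (eN.symm.toLinearMap ∘ₗ g) ∘ₗ eM.toLinearMap, eM.symm.injective.comp (hf.comp eL.injective),
      eN.symm.surjective.comp (hg.comp eM.surjective), ?_, ⟨eL⟩, ⟨eM⟩, ⟨eN⟩⟩
    exact (LinearEquiv.conj_exact_iff_exact _ _ eM.symm).mpr
      (LinearEquiv.precomp_exact_iff_exact.mpr (LinearEquiv.postcomp_exact_iff_exact.mpr hfg))
  | succ n ih =>
    obtain ⟨k, p, hp⟩ := exists_finite_free_surjective R L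
    obtain ⟨l, q, hq⟩ := exists_finite_free_surjective R N
    obtain ⟨F, hF, i, π, hi, hπ, hiπ⟩ := hfg.exists_horseshoe hf hg hp hq
    obtain ⟨SL, S, SN, i', p', hi', hp', hip', hSL, hS, hSN⟩ :=
      ih (L := .of R (ker p)) (M := .of R (ker F)) (N := .of R (ker q)) hiπ hi hπ
    exact ⟨SL, S, SN, i', p', hi', hp', hip',
      ⟨.of R (ULift (Fin k → R)), p, inferInstance, inferInstance, hp, hSL⟩,
      ⟨.of R (_ × _), F, inferInstance, inferInstance, hF, hS⟩,
      ⟨.of R (ULift (Fin l → R)), q, inferInstance, inferInstance, hq, hSN⟩⟩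

end IsSyzygy

namespace ExtClosure

variable {R : Type} [CommRing R]

theorem of_isSyzygy {X : ModuleCat.{u} R}
    (hproj : ∀ (P : ModuleCat.{u} R) [Module.Finite R P] [Module.Projective R P],
      ExtClosure.{u, w} R X P)
    {n : ℕ} {M : ModuleCat.{v} R} {S S' : ModuleCat.{u} R} (hS : IsSyzygy R n S M)
    (hS' : IsSyzygy R n S' M) (h : ExtClosure.{u, w} R X S) : ExtClosure.{u, w} R X S' := by
  induction n generalizing M S S' with
  | zero => exact h.of_linearEquiv (hS.some ≪≫ₗ hS'.some.symm)
  | succ n ih =>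
    obtain ⟨P₁, f₁, _, _, hf₁, hS⟩ := hS
    obtain ⟨P₂, f₂, _, _, hf₂, hS'⟩ := hS'
    obtain ⟨e⟩ := nonempty_ker_prod_linearEquiv_ker_prod hf₁ hf₂
    obtain ⟨Q₁, ⟨e₁⟩⟩ := exists_moduleCat_linearEquiv.{_, u} R P₁
    obtain ⟨Q₂, ⟨e₂⟩⟩ := exists_moduleCat_linearEquiv.{_, u} R P₂
    have : Module.Finite R Q₁ := .equiv e₁.symm
    have : Module.Finite R Q₂ := .equiv e₂.symm
    have : Module.Projective R Q₂ := .of_equiv e₂.symm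
    -- Schanuel: `S × Q₂` and `S' × Q₁` are `n`-th syzygies of the same module.
    have h₂ : IsSyzygy R n (.of R (S × Q₂)) (.of R (ker f₂ × P₁)) :=
      (hS.prod (IsSyzygy.of_projective e₂)).congr (.refl R _) e
    have h₁ : IsSyzygy R n (.of R (S' × Q₁)) (.of R (ker f₂ × P₁)) :=
      hS'.prod (IsSyzygy.of_projective e₁)
    exact (ih h₂ h₁ (h.prod (hproj Q₂))).of_linearEquiv_prod
      (C := Q₁) (.refl R _)

end ExtClosure

theorem stmt_6_general (R : Type) [CommRing R] [IsNoetherianRing R]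
    (G M : ModuleCat R) [Module.Finite R G]
    (hMG : ExtClosure R G M) (n : ℕ) (SG SM : ModuleCat R)
    (hSG : IsSyzygy R n SG G) (hSM : IsSyzygy R n SM M) :
    ExtClosure R (ModuleCat.of R (R × SG)) SM := by
  have := hSG.finite
  have hproj (P : ModuleCat R) [Module.Finite R P] [Module.Projective R P] :=
    (ExtClosure.ulift_self_of_prod SG).of_projective P
  induction hMG generalizing SM with
  | base =>
    exact (ExtClosure.base.of_linearEquiv_prod (C := R) (LinearEquiv.prodComm R R SG)).of_isSyzygy
      hproj hSG hSM
  | summand N N' e hM ih =>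
    have := hM.finite
    have : Module.Finite R N' := .of_surjective (snd R N N' ∘ₗ e.toLinearMap)
      (Prod.snd_surjective.comp e.surjective)
    obtain ⟨S', hS'⟩ := IsSyzygy.exists_of_finite n N'
    have := hS'.finite
    exact (ih _ ((hSM.prod hS').congr (.refl R _) e.symm)).of_linearEquiv_prod (C := S')
      (.refl R _)
  | extension f g hf hg hfg hL hN ihL ihN =>
    have := hL.finite
    have := hN.finite
    obtain ⟨SL, S, SN, i, p, hi, hp, hip, hSL, hS, hSN⟩ := IsSyzygy.horseshoe n hfg hf hg
    exact (ExtClosure.extension i p hi hp hip (ihL SL hSL) (ihN SN hSN)).of_isSyzygy hproj hS hSM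

/-- If `M` lies in the extension closure of `G` (both finitely generated over
the commutative noetherian ring `R`) and `n ≥ 0`, then any `n`-th syzygy of `M` lies in the
extension closure of `R ⊕ Ωⁿ G`, for any `n`-th syzygy `Ωⁿ G` of `G`. -/
theorem stmt_6 (R : Type) [CommRing R] [IsNoetherianRing R]
    (G M : ModuleCat R) [Module.Finite R G] [Module.Finite R M]
    (hMG : ExtClosure R G M) (n : ℕ) (SG SM : ModuleCat R)
    (hSG : IsSyzygy R n SG G) (hSM : IsSyzygy R n SM M) :
    ExtClosure R (ModuleCat.of R (R × SG)) SM :=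
  stmt_6_general R G M hMG n SG SM hSG hSM
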